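/- Let P be a (3+1)-free poset and let a, b ∈ P. Then the views v(a) and v(b) are incomparable — that is, ¬(D_a ⊆ D_b and U_b ⊆ U_a) and ¬(D_b ⊆ D_a and U_a ⊆ U_b) — if and only if a ⊤⊤ b or a ⊥⊥ b. -/

import Mathlib

/-- `x` and `y` are incomparable. -/
def Incomp {P : Type*} [PartialOrder P] (x y : P) : Prop := ¬ x ≤ y ∧ ¬ y ≤ x

/-- A poset is `(3+1)`-free if it contains no induced subposet consisting of a
chain `a < b < c` together with a vertex `d` incomparable to `a`, `b` and `c`. -/
def ThreePlusOneFree (P : Type*) [PartialOrder P] : Prop :=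
  ¬ ∃ a b c d : P, a < b ∧ b < c ∧ Incomp d a ∧ Incomp d b ∧ Incomp d c

/-- The strict downset of a vertex. -/
def Dset {P : Type*} [PartialOrder P] (a : P) : Set P := {x | x < a}

/-- The strict upset of a vertex. -/
def Uset {P : Type*} [PartialOrder P] (a : P) : Set P := {x | a < x}

/-- Two sets are parallel (incomparable under inclusion). -/
def SetPar {P : Type*} (S T : Set P) : Prop := ¬ S ⊆ T ∧ ¬ T ⊆ S

/-- `a ⊤⊤ b`: the downsets of `a` and `b` are incomparable under inclusion. -/
def TopTangleRel {P : Type*} [PartialOrder P] (a b : P) : Prop := SetPar (Dset a) (Dset b)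

/-- `a ⊥⊥ b`: the upsets of `a` and `b` are incomparable under inclusion. -/
def BotTangleRel {P : Type*} [PartialOrder P] (a b : P) : Prop := SetPar (Uset a) (Uset b)

lemma not_setPar_iff {α : Type*} {S T : Set α} : ¬ SetPar S T ↔ S ⊆ T ∨ T ⊆ S := by
  unfold SetPar
  tauto

/-- A strict lower bound `x` and a strict upper bound `z` of `a` that are not bounds of `b` would
make `x < a < z` a chain all of whose members are incomparable to `b`. -/
lemma ThreePlusOneFree.dset_subset_or_uset_subset {P : Type*} [PartialOrder P]
    (hP : ThreePlusOneFree P) (a b : P) : Dset a ⊆ Dset b ∨ Uset a ⊆ Uset b := by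
  by_contra! h
  obtain ⟨x, hxa : x < a, hxb : ¬ x < b⟩ := Set.not_subset.mp h.1
  obtain ⟨z, haz : a < z, hbz : ¬ b < z⟩ := Set.not_subset.mp h.2
  have hba : ¬ b ≤ a := fun h => hbz (h.trans_lt haz)
  have hab : ¬ a ≤ b := fun h => hxb (hxa.trans_le h)
  have hx : Incomp b x :=
    ⟨fun h => hbz (h.trans_lt (hxa.trans haz)),
      fun h => hxb (h.lt_of_ne (by rintro rfl; exact hba hxa.le))⟩
  have hz : Incomp b z :=
    ⟨fun h => hbz (h.lt_of_ne (by rintro rfl; exact hab haz.le)),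
      fun h => hxb (hxa.trans (haz.trans_le h))⟩
  exact hP ⟨x, a, z, b, hxa, haz, hx, ⟨hba, hab⟩, hz⟩

theorem views_incomparable_iff {P : Type*} [PartialOrder P]
    (hP : ThreePlusOneFree P) (a b : P) :
    (¬ (Dset a ⊆ Dset b ∧ Uset b ⊆ Uset a) ∧ ¬ (Dset b ⊆ Dset a ∧ Uset a ⊆ Uset b)) ↔
      (TopTangleRel a b ∨ BotTangleRel a b) := by
  constructor
  · rintro ⟨hab, hba⟩
    by_contra! h
    have hD := not_setPar_iff.mp h.1
    have hU := not_setPar_iff.mp h.2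
    have := hP.dset_subset_or_uset_subset a b
    have := hP.dset_subset_or_uset_subset b a
    tauto
  · rintro (⟨hDab, hDba⟩ | ⟨hUab, hUba⟩)
    · exact ⟨fun h => hDab h.1, fun h => hDba h.1⟩
    · exact ⟨fun h => hUba h.2, fun h => hUab h.2⟩
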